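/- Let n ≥ 1, let B = [0,∞)^n ⊆ ℝ^n be the closed nonnegative quadrant, and let C ⊆ ℝ^n be a closed convex set. Suppose that there exists x ∈ C with x_i ≤ 0 for all i, and that B ∩ C ≠ ∅. Then both B ∩ C and (∂B) ∩ C are nonempty contractible spaces, where ∂B = {x ∈ B : x_i = 0 for some i} is the topological boundary of B. -/

import Mathlib

/-!
Fix `x ∈ C` with `x ≤ 0`. Every `y ≥ 0` is joined to `x` by a segment that enters the orthant
`B = [0,∞)^n` through its boundary `∂B` at the parameter `entryTime x y`, the largest of the times
at which the coordinates of the segment cross `0`; these times depend continuously on `y`. Sending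
`y` to this entry point maps the convex, hence contractible, set `B ∩ C` to `∂B ∩ C`, and on
`∂B ∩ C` it is homotopic to the identity: sliding `y` along its segment back to the entry point
keeps a coordinate with `y i = 0` at zero, because either `x i = 0` or the entry time is `1`. So
`∂B ∩ C` is a homotopy retract of a contractible space.
-/

open Set AffineMap ContinuousMap

theorem ContractibleSpace.of_comp_homotopic_id {X Y : Type*} [TopologicalSpace X]
    [TopologicalSpace Y] [ContractibleSpace Y] {f : C(X, Y)} {g : C(Y, X)}
    (h : (g.comp f).Homotopic (ContinuousMap.id X)) : ContractibleSpace X := by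
  obtain ⟨x, hx⟩ := ((id_nullhomotopic Y).comp_right g).comp_left f
  exact (contractible_iff_id_nullhomotopic X).2 ⟨x, h.symm.trans hx⟩

def orthantBoundary (ι : Type*) : Set (ι → ℝ) := {y | (∀ i, 0 ≤ y i) ∧ ∃ i, y i = 0}

section EntryTime

variable {ι : Type*} [Fintype ι] [Nonempty ι] {x y : ι → ℝ} {a : ℝ}

/- Coordinate `i` of `lineMap x y` vanishes at time `-x i / (y i - x i)`. For `x ≤ 0 ≤ y` the junk
value `0 / 0 = 0` occurs only when `x i = y i = 0`, where it is still a vanishing time. -/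
noncomputable def entryTime (x y : ι → ℝ) : ℝ :=
  Finset.univ.sup' Finset.univ_nonempty fun i => -x i / (y i - x i)

lemma le_entryTime (i : ι) : -x i / (y i - x i) ≤ entryTime x y :=
  Finset.le_sup' (fun i => -x i / (y i - x i)) (Finset.mem_univ i)

lemma entryTime_nonneg (hx : ∀ i, x i ≤ 0) (hy : ∀ i, 0 ≤ y i) : 0 ≤ entryTime x y :=
  have i : ι := Classical.arbitrary ι
  (div_nonneg (neg_nonneg.2 (hx i)) (sub_nonneg.2 ((hx i).trans (hy i)))).trans (le_entryTime i)

lemma entryTime_le_one (hx : ∀ i, x i ≤ 0) (hy : ∀ i, 0 ≤ y i) : entryTime x y ≤ 1 :=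
  Finset.sup'_le _ _ fun i _ =>
    div_le_one_of_le₀ (by linarith [hy i]) (sub_nonneg.2 ((hx i).trans (hy i)))

lemma lineMap_apply_nonneg (hx : ∀ i, x i ≤ 0) (hy : ∀ i, 0 ≤ y i) (ha : entryTime x y ≤ a)
    (i : ι) : 0 ≤ lineMap x y a i := by
  have hcross : -x i / (y i - x i) * (y i - x i) = -x i :=
    div_mul_cancel_of_imp fun h => by linarith [hx i, hy i]
  have hle : -x i / (y i - x i) * (y i - x i) ≤ a * (y i - x i) :=
    mul_le_mul_of_nonneg_right ((le_entryTime i).trans ha) (sub_nonneg.2 ((hx i).trans (hy i)))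
  rw [pi_lineMap_apply, lineMap_apply_ring']
  linarith

lemma exists_lineMap_entryTime_apply_eq_zero (hx : ∀ i, x i ≤ 0) (hy : ∀ i, 0 ≤ y i) :
    ∃ i, lineMap x y (entryTime x y) i = 0 := by
  obtain ⟨i, -, hi⟩ := Finset.exists_mem_eq_sup' Finset.univ_nonempty fun i => -x i / (y i - x i)
  refine ⟨i, ?_⟩
  rw [pi_lineMap_apply, lineMap_apply_ring', entryTime, hi,
    div_mul_cancel_of_imp fun h => by linarith [hx i, hy i]]
  ring

lemma lineMap_apply_eq_zero {i : ι} (hx : ∀ i, x i ≤ 0) (hy : ∀ i, 0 ≤ y i) (hyi : y i = 0)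
    (ha : entryTime x y ≤ a) (ha₁ : a ≤ 1) : lineMap x y a i = 0 := by
  refine le_antisymm ?_ (lineMap_apply_nonneg hx hy ha i)
  rw [pi_lineMap_apply, lineMap_apply_ring', hyi]
  nlinarith [hx i]

lemma continuousOn_entryTime (hx : ∀ i, x i ≤ 0) :
    ContinuousOn (entryTime x) {y | ∀ i, 0 ≤ y i} := by
  refine ContinuousOn.finset_sup'_apply Finset.univ_nonempty fun i _ => ?_
  show ContinuousOn (fun y : ι → ℝ => -x i / (y i - x i)) _
  rcases (hx i).lt_or_eq with hxi | hxi
  · exact continuousOn_const.div (by fun_prop) fun y hy => (sub_pos.2 (hxi.trans_le (hy i))).ne'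
  · simp only [hxi, neg_zero, zero_div]
    exact continuousOn_const

lemma lineMap_entryTime_mem_orthantBoundary (hx : ∀ i, x i ≤ 0) (hy : ∀ i, 0 ≤ y i) :
    lineMap x y (entryTime x y) ∈ orthantBoundary ι :=
  ⟨lineMap_apply_nonneg hx hy le_rfl, exists_lineMap_entryTime_apply_eq_zero hx hy⟩

lemma lineMap_mem_orthantBoundary (hx : ∀ i, x i ≤ 0) (hy : y ∈ orthantBoundary ι)
    (ha : a ∈ Icc (entryTime x y) 1) : lineMap x y a ∈ orthantBoundary ι :=
  have ⟨i, hyi⟩ := hy.2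
  ⟨lineMap_apply_nonneg hx hy.1 ha.1, i, lineMap_apply_eq_zero hx hy.1 hyi ha.1 ha.2⟩

theorem contractibleSpace_orthantBoundary_inter {C : Set (ι → ℝ)} (hC : Convex ℝ C) (hxC : x ∈ C)
    (hx : ∀ i, x i ≤ 0) (hne : ({y | ∀ i, 0 ≤ y i} ∩ C).Nonempty) :
    ContractibleSpace ↥(orthantBoundary ι ∩ C) := by
  set K := {y : ι → ℝ | ∀ i, 0 ≤ y i} ∩ C
  set S := orthantBoundary ι ∩ C
  have hB : Convex ℝ {y : ι → ℝ | ∀ i, 0 ≤ y i} := convex_Ici 0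
  have : ContractibleSpace K := (hB.inter hC).contractibleSpace hne
  have hmemC {y : ι → ℝ} (hyC : y ∈ C) (hy : ∀ i, 0 ≤ y i) {a : ℝ}
      (ha : a ∈ Icc (entryTime x y) 1) : lineMap x y a ∈ C :=
    hC.lineMap_mem hxC hyC ⟨(entryTime_nonneg hx hy).trans ha.1, ha.2⟩
  have hT : ContinuousOn (entryTime x) {y | ∀ i, 0 ≤ y i} := continuousOn_entryTime hx
  let incl : C(S, K) := ⟨inclusion fun y hy => ⟨hy.1.1, hy.2⟩, continuous_inclusion _⟩
  let proj : C(K, S) :=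
    ⟨fun y => ⟨lineMap x y (entryTime x y), lineMap_entryTime_mem_orthantBoundary hx y.2.1,
        hmemC y.2.2 y.2.1 ⟨le_rfl, entryTime_le_one hx y.2.1⟩⟩,
      .subtype_mk (continuous_const.lineMap continuous_subtype_val
        (hT.comp_continuous continuous_subtype_val fun y => y.2.1)) _⟩
  have hIcc (y : S) (s : unitInterval) :
      lineMap (entryTime x y) 1 (s : ℝ) ∈ Icc (entryTime x y) 1 :=
    have h₁ := entryTime_le_one hx y.2.1.1
    (convex_Icc _ _).lineMap_mem ⟨le_rfl, h₁⟩ ⟨h₁, le_rfl⟩ s.2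
  refine ContractibleSpace.of_comp_homotopic_id (f := incl) (g := proj) ⟨
    { toFun := fun q => ⟨lineMap x q.2 (lineMap (entryTime x q.2) 1 (q.1 : ℝ)), ?_⟩
      continuous_toFun := ?_
      map_zero_left := ?_
      map_one_left := ?_ }⟩
  · exact ⟨lineMap_mem_orthantBoundary hx q.2.2.1 (hIcc _ _), hmemC q.2.2.2 q.2.2.1.1 (hIcc _ _)⟩
  · exact .subtype_mk (continuous_const.lineMap (by fun_prop)
      ((hT.comp_continuous (by fun_prop) fun q => q.2.2.1.1).lineMap continuous_const
        (by fun_prop))) _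
  · exact fun y => Subtype.ext <| by simp [proj, incl]
  · exact fun y => Subtype.ext <| by simp

end EntryTime

theorem quadrant_intersections_contractible
    {n : ℕ} (hn : 1 ≤ n)
    (C : Set (Fin n → ℝ)) (hCconv : Convex ℝ C)
    (hx : ∃ x ∈ C, ∀ i, x i ≤ 0)
    (hBC : ({x : Fin n → ℝ | ∀ i, 0 ≤ x i} ∩ C).Nonempty) :
    ({x : Fin n → ℝ | ∀ i, 0 ≤ x i} ∩ C).Nonempty ∧
    ContractibleSpace ↥({x : Fin n → ℝ | ∀ i, 0 ≤ x i} ∩ C) ∧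
    ({x : Fin n → ℝ | (∀ i, 0 ≤ x i) ∧ ∃ i, x i = 0} ∩ C).Nonempty ∧
    ContractibleSpace
      ↥({x : Fin n → ℝ | (∀ i, 0 ≤ x i) ∧ ∃ i, x i = 0} ∩ C) := by
  have : Nonempty (Fin n) := ⟨⟨0, hn⟩⟩
  obtain ⟨x, hxC, hx⟩ := hx
  have hS : ContractibleSpace ↥(orthantBoundary (Fin n) ∩ C) :=
    contractibleSpace_orthantBoundary_inter hCconv hxC hx hBC
  exact ⟨hBC, ((convex_Ici 0).inter hCconv).contractibleSpace hBC,
    nonempty_coe_sort.1 (inferInstance : Nonempty ↥(orthantBoundary (Fin n) ∩ C)), hS⟩
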